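/- arXiv:2302.10636 — 3 statements merged into one kernel-verified Lean document; each statement's English description precedes it below -/
import Mathlib

section
/- If f : U → ℝⁿ is a PAP function and A ⊆ ℝⁿ is a c-analytic set, then f⁻¹(A) is c-analytic. -/
open Set

/-- An analytic set in ℝⁿ. -/
def IsAnalyticSet {n : ℕ} (A : Set (Fin n → ℝ)) : Prop :=
  ∃ (W : Set (Fin n → ℝ)) (I : Finset ℕ) (g : ℕ → (Fin n → ℝ) → ℝ),
    IsOpen W ∧ (∀ i ∈ I, AnalyticOnNhd ℝ (g i) W) ∧
    A = {x | x ∈ W ∧ ∀ i ∈ I, g i x ≤ 0}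

/-- A c-analytic set: a countable union of analytic sets. -/
def IsCAnalyticSet {n : ℕ} (A : Set (Fin n → ℝ)) : Prop :=
  ∃ B : ℕ → Set (Fin n → ℝ), (∀ i, IsAnalyticSet (B i)) ∧ A = ⋃ i, B i

/-- A PAP function on a c-analytic set `U ⊆ ℝᵐ` with values in ℝⁿ: there is a
countable family of analytic sets partitioning `U`, on each of which `f`
coincides with a function analytic on an open neighborhood of the piece. -/
def IsPAPFunction {m n : ℕ} (U : Set (Fin m → ℝ))
    (f : (Fin m → ℝ) → (Fin n → ℝ)) : Prop :=
  IsCAnalyticSet U ∧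
  ∃ (A : ℕ → Set (Fin m → ℝ)) (F : ℕ → (Fin m → ℝ) → (Fin n → ℝ))
    (V : ℕ → Set (Fin m → ℝ)),
    (∀ i, IsAnalyticSet (A i)) ∧
    Pairwise (Function.onFun Disjoint A) ∧
    (⋃ i, A i) = U ∧
    (∀ i, IsOpen (V i) ∧ A i ⊆ V i ∧ AnalyticOnNhd ℝ (F i) (V i)) ∧
    (∀ i, ∀ x ∈ A i, f x = F i x)

lemma IsAnalyticSet.inter {n : ℕ} {A B : Set (Fin n → ℝ)}
    (hA : IsAnalyticSet A) (hB : IsAnalyticSet B) : IsAnalyticSet (A ∩ B) := by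
  obtain ⟨W1, I1, g1, hW1, hg1, rfl⟩ := hA
  obtain ⟨W2, I2, g2, hW2, hg2, rfl⟩ := hB
  refine ⟨W1 ∩ W2, I1.image (fun i => 2*i) ∪ I2.image (fun i => 2*i+1),
    fun k => if k % 2 = 0 then g1 (k/2) else g2 (k/2), hW1.inter hW2, ?_, ?_⟩
  · intro k hk
    simp only [Finset.mem_union, Finset.mem_image] at hk
    rcases hk with ⟨i, hi, rfl⟩ | ⟨i, hi, rfl⟩
    · have h1 : (2*i) % 2 = 0 := by omega
      have h2 : 2*i/2 = i := by omega
      simp only [h1, h2, if_pos]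
      exact (hg1 i hi).mono inter_subset_left
    · have h1 : ¬((2*i+1) % 2 = 0) := by omega
      have h2 : (2*i+1)/2 = i := by omega
      simp only [h1, h2, if_neg, if_false]
      exact (hg2 i hi).mono inter_subset_right
  · ext x
    simp only [Set.mem_inter_iff, Set.mem_setOf_eq, Finset.mem_union, Finset.mem_image]
    constructor
    · rintro ⟨⟨hxW1, h1⟩, hxW2, h2⟩
      refine ⟨⟨hxW1, hxW2⟩, ?_⟩
      rintro k (⟨i, hi, rfl⟩ | ⟨i, hi, rfl⟩)
      · have e1 : (2*i) % 2 = 0 := by omega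
        have e2 : 2*i/2 = i := by omega
        simp only [e1, e2, if_pos]
        exact h1 i hi
      · have e1 : ¬((2*i+1) % 2 = 0) := by omega
        have e2 : (2*i+1)/2 = i := by omega
        simp only [e1, e2, if_neg, if_false]
        exact h2 i hi
    · rintro ⟨⟨hxW1, hxW2⟩, h⟩
      refine ⟨⟨hxW1, fun i hi => ?_⟩, hxW2, fun i hi => ?_⟩
      · have := h (2*i) (Or.inl ⟨i, hi, rfl⟩)
        have e1 : (2*i) % 2 = 0 := by omega
        have e2 : 2*i/2 = i := by omega
        simpa only [e1, e2, if_pos] using this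
      · have := h (2*i+1) (Or.inr ⟨i, hi, rfl⟩)
        have e1 : ¬((2*i+1) % 2 = 0) := by omega
        have e2 : (2*i+1)/2 = i := by omega
        simpa only [e1, e2, if_neg, if_false] using this

/-- Preimages of c-analytic sets under PAP functions are c-analytic. -/
theorem isCAnalyticSet_preimage_pap {m n : ℕ} {U : Set (Fin m → ℝ)}
    {f : (Fin m → ℝ) → (Fin n → ℝ)} (hf : IsPAPFunction U f)
    {A : Set (Fin n → ℝ)} (hA : IsCAnalyticSet A) :
    IsCAnalyticSet {x | x ∈ U ∧ f x ∈ A} := by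
  obtain ⟨hU, P, F, V, hPan, hdisj, hPU, hV, hfF⟩ := hf
  obtain ⟨B, hBan, rfl⟩ := hA
  set S : ℕ → ℕ → Set (Fin m → ℝ) :=
    fun i j => P i ∩ {x | x ∈ V i ∧ F i x ∈ B j} with hS
  have key : ∀ i j, IsAnalyticSet (S i j) := by
    intro i j
    obtain ⟨hVo, hPV, hFan⟩ := hV i
    obtain ⟨W, I, g, hWo, hgan, hBj⟩ := hBan j
    refine (hPan i).inter ⟨V i ∩ (F i) ⁻¹' W, I, fun k => g k ∘ F i,
      hFan.continuousOn.isOpen_inter_preimage hVo hWo, ?_, ?_⟩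
    · intro k hk
      exact (hgan k hk).comp (hFan.mono inter_subset_left) (fun x hx => hx.2)
    · rw [hBj]
      ext x
      simp only [Set.mem_setOf_eq, Set.mem_inter_iff, Set.mem_preimage,
        Function.comp_apply]
      tauto
  have e := Nat.pairEquiv.symm
  refine ⟨fun k => S (Nat.pairEquiv.symm k).1 (Nat.pairEquiv.symm k).2,
    fun k => key _ _, ?_⟩
  ext x
  simp only [Set.mem_setOf_eq, Set.mem_iUnion]
  constructor
  · rintro ⟨hxU, j, hxB⟩
    rw [← hPU] at hxU
    obtain ⟨i, hxP⟩ := Set.mem_iUnion.mp hxU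
    refine ⟨Nat.pairEquiv (i, j), ?_⟩
    rw [Equiv.symm_apply_apply]
    exact ⟨hxP, (hV i).2.1 hxP, by rw [← hfF i x hxP]; exact hxB⟩
  · rintro ⟨k, hxP, hxV, hxB⟩
    set i := (Nat.pairEquiv.symm k).1
    refine ⟨?_, (Nat.pairEquiv.symm k).2, ?_⟩
    · rw [← hPU]; exact Set.mem_iUnion.mpr ⟨i, hxP⟩
    · rw [hfF i x hxP]; exact hxB
end

section
/- The composition of two PAP functions is PAP. -/
open Set

lemma isAnalyticSet_inter_preimage {n m : ℕ} {O : Set (Fin n → ℝ)} (hO : IsOpen O)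
    {F : (Fin n → ℝ) → (Fin m → ℝ)} (hF : AnalyticOnNhd ℝ F O)
    {B : Set (Fin m → ℝ)} (hB : IsAnalyticSet B) :
    IsAnalyticSet (O ∩ F ⁻¹' B) := by
  obtain ⟨W, I, g, hW, hg, rfl⟩ := hB
  refine ⟨O ∩ F ⁻¹' W, I, fun i => (g i) ∘ F,
    hF.continuousOn.isOpen_inter_preimage hO hW, ?_, ?_⟩
  · intro i hi
    exact (hg i hi).comp (hF.mono inter_subset_left) (fun x hx => hx.2)
  · ext x
    simp only [mem_inter_iff, mem_preimage, mem_setOf_eq, Function.comp_apply]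
    tauto

/-- The composition of two PAP functions is PAP. -/
theorem isPAPFunction_comp {n m k : ℕ} {U : Set (Fin n → ℝ)}
    {V : Set (Fin m → ℝ)} {f : (Fin n → ℝ) → (Fin m → ℝ)}
    {g : (Fin m → ℝ) → (Fin k → ℝ)}
    (hf : IsPAPFunction U f) (hg : IsPAPFunction V g)
    (hfUV : Set.MapsTo f U V) :
    IsPAPFunction U (g ∘ f) := by
  obtain ⟨hU, A, F, Vf, hA, hAdisj, hAU, hAV, hAF⟩ := hf
  obtain ⟨hV, B, G, Wg, hB, hBdisj, hBV, hBW, hBG⟩ := hg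
  refine ⟨hU,
    fun p => A (Nat.unpair p).1 ∩ (Vf (Nat.unpair p).1 ∩ F (Nat.unpair p).1 ⁻¹' B (Nat.unpair p).2),
    fun p => G (Nat.unpair p).2 ∘ F (Nat.unpair p).1,
    fun p => Vf (Nat.unpair p).1 ∩ F (Nat.unpair p).1 ⁻¹' Wg (Nat.unpair p).2,
    ?_, ?_, ?_, ?_, ?_⟩
  · intro p
    exact (hA _).inter (isAnalyticSet_inter_preimage (hAV _).1 (hAV _).2.2 (hB _))
  · intro p q hpq
    rw [Function.onFun, Set.disjoint_left]
    rintro x ⟨hx1, _, hx2⟩ ⟨hy1, _, hy2⟩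
    rcases eq_or_ne (Nat.unpair p).1 (Nat.unpair q).1 with h1 | h1
    · have h2 : (Nat.unpair p).2 ≠ (Nat.unpair q).2 := by
        intro h2
        apply hpq
        have := Nat.pair_unpair p
        rw [← Nat.pair_unpair p, ← Nat.pair_unpair q, h1, h2]
      rw [Set.mem_preimage, h1] at hx2
      exact Set.disjoint_left.1 (hBdisj h2) hx2 hy2
    · exact Set.disjoint_left.1 (hAdisj h1) hx1 hy1
  · apply Set.eq_of_subset_of_subset
    · refine Set.iUnion_subset fun p => ?_
      refine subset_trans inter_subset_left ?_
      rw [← hAU]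
      exact Set.subset_iUnion A _
    · intro x hx
      have hxA : x ∈ ⋃ i, A i := by rw [hAU]; exact hx
      obtain ⟨i, hi⟩ := Set.mem_iUnion.1 hxA
      have hfx : f x ∈ ⋃ j, B j := by rw [hBV]; exact hfUV hx
      obtain ⟨j, hj⟩ := Set.mem_iUnion.1 hfx
      refine Set.mem_iUnion.2 ⟨Nat.pair i j, ?_⟩
      have hup : Nat.unpair (Nat.pair i j) = (i, j) := Nat.unpair_pair i j
      rw [Set.mem_inter_iff, hup]
      refine ⟨hi, (hAV i).2.1 hi, ?_⟩
      show F i x ∈ B j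
      rw [← hAF i x hi]
      exact hj
  · intro p
    refine ⟨(hAV _).2.2.continuousOn.isOpen_inter_preimage (hAV _).1 (hBW _).1, ?_, ?_⟩
    · rintro x ⟨hx1, hx2, hx3⟩
      exact ⟨hx2, (hBW _).2.1 hx3⟩
    · exact (hBW _).2.2.comp ((hAV _).2.2.mono inter_subset_left) (fun x hx => hx.2)
  · rintro p x ⟨hx1, _, hx3⟩
    simp only [Function.comp_apply]
    rw [hAF _ x hx1]
    exact hBG _ _ hx3
end

section
/- For every analytic set A ⊆ ℝⁿ there exists an open set U ⊆ A such that A \ U has Lebesgue measure zero. -/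
open Set MeasureTheory

/-!
Take `U` to be the interior of `A = {x ∈ W | ∀ i ∈ I, gᵢ x ≤ 0}`. A point of `A \ U` is a zero of
some `gᵢ` near which `gᵢ` is not identically zero. By analyticity some iterated derivative of `gᵢ`
is nonzero there, so at the first nonvanishing order `k` the map `Φ = D^(k-1) gᵢ` vanishes while
some partial derivative `∂ⱼΦ` does not. Such zeros of `Φ` are isolated on every line parallel to
the `j`-th axis, hence countable on it, and Fubini makes them a null set.
-/

open Filter Topology

theorem volume_eq_zero_of_countable_insertNth_slices {m : ℕ} (j : Fin (m + 1))
    {S : Set (Fin (m + 1) → ℝ)} (hS : MeasurableSet S)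
    (h : ∀ y : Fin m → ℝ, {t : ℝ | j.insertNth t y ∈ S}.Countable) :
    volume S = 0 := by
  let e := MeasurableEquiv.piFinSuccAbove (fun _ : Fin (m + 1) => ℝ) j
  have he : MeasurePreserving e.symm volume volume :=
    (volume_preserving_piFinSuccAbove (fun _ : Fin (m + 1) => ℝ) j).symm e
  rw [← he.measure_preimage hS.nullMeasurableSet, Measure.volume_eq_prod,
    Measure.prod_apply_symm (e.symm.measurable hS)]
  have hslice : ∀ y, volume ((fun t : ℝ => (t, y)) ⁻¹' (e.symm ⁻¹' S)) = 0 :=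
    fun y => (h y).measure_zero volume
  simp only [hslice, lintegral_zero]

section RegularZeros

variable {F : Type*} [NormedAddCommGroup F] [NormedSpace ℝ F]

theorem HasFDerivAt.hasDerivAt_comp_insertNth {m : ℕ} {Φ : (Fin (m + 1) → ℝ) → F}
    {j : Fin (m + 1)} {y : Fin m → ℝ} {t : ℝ} {Φ' : (Fin (m + 1) → ℝ) →L[ℝ] F}
    (hΦ : HasFDerivAt Φ Φ' (j.insertNth t y)) :
    HasDerivAt (fun u => Φ (j.insertNth u y)) (Φ' (Pi.single j 1)) t := by
  have h := hΦ.comp_hasDerivAt_of_eq t (hasDerivAt_update (j.insertNth 0 y) j t)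
    (by rw [Fin.update_insertNth])
  simpa [Function.comp_def, Fin.update_insertNth] using h

theorem volume_setOf_eq_zero_fderiv_single_ne_zero [CompleteSpace F] {n : ℕ}
    {W : Set (Fin n → ℝ)} (hW : IsOpen W) {Φ : (Fin n → ℝ) → F} (hΦ : ContinuousOn Φ W)
    (j : Fin n) :
    volume {x ∈ W | Φ x = 0 ∧ fderiv ℝ Φ x (Pi.single j 1) ≠ 0} = 0 := by
  borelize F
  obtain ⟨m, rfl⟩ : ∃ m, n = m + 1 := Nat.exists_eq_add_one.2 j.pos
  have hzeros : MeasurableSet {x ∈ W | Φ x = 0} := by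
    have : {x ∈ W | Φ x = 0} = W \ (W ∩ Φ ⁻¹' {0}ᶜ) := by ext; simp
    rw [this]
    exact hW.measurableSet.diff (hΦ.isOpen_inter_preimage hW isOpen_compl_singleton).measurableSet
  refine volume_eq_zero_of_countable_insertNth_slices j ?_ fun y => ?_
  · simp only [← and_assoc]
    exact hzeros.inter ((measurable_fderiv_apply_const ℝ Φ _) isOpen_compl_singleton.measurableSet)
  refine (HereditarilyLindelofSpace.isLindelof _).countable_of_isDiscrete
    (isDiscrete_iff_nhdsNE.2 fun t ⟨_, _, hderiv⟩ => ?_)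
  have hdiff : DifferentiableAt ℝ Φ (j.insertNth t y) := by
    by_contra h
    simp [fderiv_zero_of_not_differentiableAt h] at hderiv
  rw [inf_principal_eq_bot]
  filter_upwards [hdiff.hasFDerivAt.hasDerivAt_comp_insertNth.eventually_ne (c := 0) hderiv]
    with u hu hmem using hu hmem.2.1

theorem volume_setOf_eq_zero_fderiv_ne_zero [CompleteSpace F] {n : ℕ}
    {W : Set (Fin n → ℝ)} (hW : IsOpen W) {Φ : (Fin n → ℝ) → F} (hΦ : ContinuousOn Φ W) :
    volume {x ∈ W | Φ x = 0 ∧ fderiv ℝ Φ x ≠ 0} = 0 := by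
  refine measure_mono_null (fun x ⟨hxW, hzero, hderiv⟩ => ?_)
    (measure_iUnion_null (volume_setOf_eq_zero_fderiv_single_ne_zero hW hΦ))
  by_contra! h
  simp only [mem_iUnion, mem_ofPred_eq, not_exists, not_and, not_not] at h
  refine hderiv (ContinuousLinearMap.coe_injective (LinearMap.pi_ext fun j c => ?_))
  have hsingle : Pi.single j c = c • Pi.single j (1 : ℝ) := by ext; simp [Pi.single_apply]
  simp [hsingle, h j hxW hzero]

end RegularZeros

section Analytic

variable {𝕜 E F : Type*} [NontriviallyNormedField 𝕜] [NormedAddCommGroup E] [NormedSpace 𝕜 E]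
  [NormedAddCommGroup F] [NormedSpace 𝕜 F] {g : E → F} {x : E}

theorem AnalyticAt.eventuallyEq_zero_of_iteratedFDeriv_eq_zero [CharZero 𝕜] [CompleteSpace F]
    (hg : AnalyticAt 𝕜 g x) (h : ∀ k, iteratedFDeriv 𝕜 k g x = 0) : g =ᶠ[𝓝 x] 0 := by
  obtain ⟨p, r, hp⟩ := hg
  have hball : ∀ᶠ z in 𝓝 x, z - x ∈ Metric.eball (0 : E) r :=
    tendsto_sub_nhds_zero_iff.2 tendsto_id |>.eventually (Metric.eball_mem_nhds 0 hp.r_pos)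
  filter_upwards [hball] with z hz
  have hsum := hp.hasSum_iteratedFDeriv hz
  simp only [h, zero_apply, smul_zero, add_sub_cancel] at hsum
  exact hsum.unique hasSum_zero

theorem AnalyticAt.exists_iteratedFDeriv_eq_zero_fderiv_ne_zero [CharZero 𝕜] [CompleteSpace F]
    (hg : AnalyticAt 𝕜 g x) (hzero : g x = 0) (hloc : ¬g =ᶠ[𝓝 x] 0) :
    ∃ k, iteratedFDeriv 𝕜 k g x = 0 ∧ fderiv 𝕜 (iteratedFDeriv 𝕜 k g) x ≠ 0 := by
  classical
  have hex : ∃ k, iteratedFDeriv 𝕜 k g x ≠ 0 := by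
    by_contra! h
    exact hloc (hg.eventuallyEq_zero_of_iteratedFDeriv_eq_zero h)
  obtain ⟨k, hk⟩ : ∃ k, Nat.find hex = k + 1 := by
    refine Nat.exists_eq_add_one.2 (Nat.pos_of_ne_zero fun h0 => ?_)
    have := Nat.find_spec hex
    rw [h0, ← norm_ne_zero_iff, norm_iteratedFDeriv_zero, hzero, norm_zero] at this
    exact this rfl
  refine ⟨k, not_not.1 (Nat.find_min hex (by omega)), fun hd => Nat.find_spec hex ?_⟩
  rw [hk, iteratedFDeriv_succ_eq_comp_left, Function.comp_apply, hd]
  exact LinearIsometryEquiv.map_zero _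

end Analytic

theorem AnalyticOnNhd.volume_setOf_eq_zero_not_eventuallyEq_zero {F : Type*}
    [NormedAddCommGroup F] [NormedSpace ℝ F] [CompleteSpace F] {n : ℕ} {W : Set (Fin n → ℝ)}
    (hW : IsOpen W) {g : (Fin n → ℝ) → F} (hg : AnalyticOnNhd ℝ g W) :
    volume {x ∈ W | g x = 0 ∧ ¬g =ᶠ[𝓝 x] 0} = 0 := by
  refine measure_mono_null (fun x ⟨hxW, hzero, hloc⟩ => ?_) (measure_iUnion_null fun k =>
    volume_setOf_eq_zero_fderiv_ne_zero hW (hg.iteratedFDeriv_of_isOpen hW k).continuousOn)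
  obtain ⟨k, hk⟩ := (hg x hxW).exists_iteratedFDeriv_eq_zero_fderiv_ne_zero hzero hloc
  exact mem_iUnion.2 ⟨k, hxW, hk⟩

theorem diff_interior_setOf_le_zero_subset {X ι : Type*} [TopologicalSpace X] {W : Set X}
    (hW : IsOpen W) {I : Finset ι} {g : ι → X → ℝ} (hg : ∀ i ∈ I, ContinuousOn (g i) W) :
    {x ∈ W | ∀ i ∈ I, g i x ≤ 0} \ interior {x ∈ W | ∀ i ∈ I, g i x ≤ 0} ⊆
      ⋃ i ∈ I, {x ∈ W | g i x = 0 ∧ ¬g i =ᶠ[𝓝 x] 0} := by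
  rintro x ⟨⟨hxW, hle⟩, hint⟩
  by_contra! hx
  simp only [mem_iUnion, mem_ofPred_eq, not_exists, not_and, not_not] at hx
  have hnear : ∀ i ∈ I, ∀ᶠ y in 𝓝 x, g i y ≤ 0 := fun i hi => by
    rcases (hle i hi).lt_or_eq with hlt | heq
    · exact ((hg i hi).continuousAt (hW.mem_nhds hxW)).eventually (gt_mem_nhds hlt) |>.mono
        fun _ => le_of_lt
    · exact (hx i hi hxW heq).mono fun _ hy => hy.le
  refine hint (mem_interior_iff_mem_nhds.2 ?_)
  filter_upwards [hW.mem_nhds hxW, (eventually_all_finset I).2 hnear] with y hyW hy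
  exact ⟨hyW, hy⟩

/-- For every analytic set `A ⊆ ℝⁿ` there is an open `U ⊆ A` such that
`A \ U` has Lebesgue measure zero. -/
theorem analyticSet_has_big_open {n : ℕ} {A : Set (Fin n → ℝ)}
    (hA : IsAnalyticSet A) :
    ∃ U : Set (Fin n → ℝ), IsOpen U ∧ U ⊆ A ∧ volume (A \ U) = 0 := by
  obtain ⟨W, I, g, hW, hg, rfl⟩ := hA
  refine ⟨_, isOpen_interior, interior_subset, measure_mono_null
    (diff_interior_setOf_le_zero_subset hW fun i hi => (hg i hi).continuousOn) ?_⟩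
  exact (measure_biUnion_null_iff I.countable_toSet).2 fun i hi =>
    (hg i hi).volume_setOf_eq_zero_not_eventuallyEq_zero hW
end
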